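/- arXiv:2305.01939 — 2 statements merged into one kernel-verified Lean document; each statement's English description precedes it below -/
import Mathlib

section
/- Suppose additionally that I(S) = 0 whenever |S| ≥ M+1 (no interactions of order above M). Then for every M ≤ m ≤ n, ū(m) = ∑_{k=1}^{M} (C(m,k)/C(n,k)) · A(k), where A(k) = ∑_{|T|=k} I(T). -/
/-!
Möbius inversion on the Boolean lattice turns the definition of the dividend into
`u S = ∑_{T ⊆ S} I T`. Summing over all `m`-sets and counting the `C(n - k, m - k)` of them that
contain a given `k`-set gives `∑_{|S| = m} u S = ∑_k C(n - k, m - k) A(k)`; the term `k = 0`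
is `I ∅ = u ∅ = 0`, the terms `k > M` vanish, and `C(n - k, m - k) / C(n, m) = C(m, k) / C(n, k)`.
-/

open Finset

namespace Finset

variable {α : Type*} [DecidableEq α]

theorem sum_Icc_neg_one_pow_card_sub {R : Type*} [Ring R] {s t : Finset α} (hst : s ⊆ t) :
    ∑ u ∈ Icc s t, (-1 : R) ^ (#u - #s) = if s = t then 1 else 0 := by
  have hinj : Set.InjOn (s ∪ ·) ↑(t \ s).powerset := fun a ha b hb hab => by
    have hda : Disjoint a s := disjoint_of_subset_left (mem_powerset.mp ha) disjoint_sdiff_self_left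
    have hdb : Disjoint b s := disjoint_of_subset_left (mem_powerset.mp hb) disjoint_sdiff_self_left
    simpa [union_sdiff_cancel_left hda.symm, union_sdiff_cancel_left hdb.symm] using
      congrArg (· \ s) hab
  rw [Icc_eq_image_powerset hst, sum_image hinj]
  have hcard : ∀ w ∈ (t \ s).powerset, #(s ∪ w) - #s = #w := fun w hw => by
    rw [card_union_of_disjoint
      (disjoint_of_subset_right (mem_powerset.mp hw) disjoint_sdiff)]
    omega
  rw [sum_congr rfl fun w hw => by rw [hcard w hw]]
  have halt := congrArg (Int.cast : ℤ → R) (sum_powerset_neg_one_pow_card (x := t \ s))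
  push_cast at halt
  have hiff : t \ s = ∅ ↔ s = t := by
    rw [sdiff_eq_empty_iff_subset]; exact ⟨subset_antisymm hst, fun h => h ▸ subset_rfl⟩
  rw [halt]
  exact if_congr hiff rfl rfl

theorem sum_powerset_eq_of_eq_sum_neg_one_pow {R : Type*} [CommRing R] (u I : Finset α → R)
    (hI : ∀ s, I s = ∑ t ∈ s.powerset, (-1) ^ (#s - #t) * u t) (s : Finset α) :
    ∑ t ∈ s.powerset, I t = u s := by
  calc ∑ t ∈ s.powerset, I t
      = ∑ t ∈ s.powerset, ∑ r ∈ t.powerset, (-1) ^ (#t - #r) * u r := sum_congr rfl fun t _ => hI t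
    _ = ∑ r ∈ s.powerset, ∑ t ∈ Icc r s, (-1) ^ (#t - #r) * u r :=
        sum_comm' fun t r => by simp only [mem_powerset, mem_Icc]; grind
    _ = ∑ r ∈ s.powerset, if r = s then u r else 0 := sum_congr rfl fun r hr => by
        rw [← sum_mul, sum_Icc_neg_one_pow_card_sub (mem_powerset.mp hr), ite_zero_mul, one_mul]
    _ = u s := by rw [sum_ite_eq' _ _ u, if_pos (mem_powerset_self s)]

variable {β : Type*} [AddCommMonoid β]

theorem sum_powersetCard_sum_powersetCard (f : Finset α → β) (s : Finset α) {k m : ℕ}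
    (hkm : k ≤ m) :
    ∑ t ∈ s.powersetCard m, ∑ r ∈ t.powersetCard k, f r
      = (#s - k).choose (m - k) • ∑ r ∈ s.powersetCard k, f r := by
  calc ∑ t ∈ s.powersetCard m, ∑ r ∈ t.powersetCard k, f r
      = ∑ r ∈ s.powersetCard k, ∑ t ∈ (s.powersetCard m).filter (r ⊆ ·), f r :=
        sum_comm' fun t r => by simp only [mem_powersetCard, mem_filter]; grind
    _ = (#s - k).choose (m - k) • ∑ r ∈ s.powersetCard k, f r := by
        rw [smul_sum]
        refine sum_congr rfl fun r hr => ?_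
        obtain ⟨hrs, rfl⟩ := mem_powersetCard.mp hr
        rw [sum_const, card_filter_powersetCard_subset r s m hrs hkm]

theorem sum_powersetCard_sum_powerset (f : Finset α → β) (s : Finset α) (m : ℕ) :
    ∑ t ∈ s.powersetCard m, ∑ r ∈ t.powerset, f r
      = ∑ k ∈ range (m + 1), (#s - k).choose (m - k) • ∑ r ∈ s.powersetCard k, f r := by
  calc ∑ t ∈ s.powersetCard m, ∑ r ∈ t.powerset, f r
      = ∑ t ∈ s.powersetCard m, ∑ k ∈ range (m + 1), ∑ r ∈ t.powersetCard k, f r :=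
        sum_congr rfl fun t ht => by rw [sum_powerset, (mem_powersetCard.mp ht).2]
    _ = _ := by
        rw [sum_comm]
        exact sum_congr rfl fun k hk =>
          sum_powersetCard_sum_powersetCard f s (Nat.lt_succ_iff.mp (mem_range.mp hk))

end Finset

theorem Nat.choose_sub_div_choose {n m k : ℕ} (hkm : k ≤ m) (hmn : m ≤ n) :
    ((n - k).choose (m - k) : ℝ) / n.choose m = m.choose k / n.choose k := by
  have hm : (n.choose m : ℝ) ≠ 0 := by exact_mod_cast (Nat.choose_pos hmn).ne'
  have hk : (n.choose k : ℝ) ≠ 0 := by exact_mod_cast (Nat.choose_pos (hkm.trans hmn)).ne'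
  rw [div_eq_div_iff hm hk]
  norm_cast
  linarith [Nat.choose_mul (n := n) hkm]

theorem avg_output_decomposition_bounded_order_general {N : Type*} [Fintype N] [DecidableEq N]
    (u I : Finset N → ℝ) (hu : u ∅ = 0)
    (hI : ∀ S : Finset N, I S = ∑ T ∈ S.powerset, (-1 : ℝ) ^ (S.card - T.card) * u T)
    (M : ℕ)
    (hhigh : ∀ S : Finset N, M < S.card → I S = 0)
    (A : ℕ → ℝ)
    (hA : ∀ k, A k = ∑ T ∈ Finset.powersetCard k (Finset.univ : Finset N), I T)
    (ubar : ℕ → ℝ)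
    (hubar : ∀ m, ubar m = ((Nat.choose (Fintype.card N) m : ℝ))⁻¹ *
        ∑ S ∈ Finset.powersetCard m (Finset.univ : Finset N), u S) :
    ∀ m, M ≤ m → m ≤ Fintype.card N →
      ubar m = ∑ k ∈ Finset.Icc 1 M,
        ((Nat.choose m k : ℝ) / (Nat.choose (Fintype.card N) k : ℝ)) * A k := by
  intro m hMm hmn
  have hA_zero : A 0 = 0 := by
    simpa [hA, hu] using sum_powerset_eq_of_eq_sum_neg_one_pow u I hI ∅
  have hA_high : ∀ k, M < k → A k = 0 := fun k hk => by
    rw [hA]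
    exact sum_eq_zero fun T hT => hhigh T ((mem_powersetCard.mp hT).2 ▸ hk)
  have hsum : ∑ S ∈ powersetCard m univ, u S
      = ∑ k ∈ Icc 1 M, ((Fintype.card N - k).choose (m - k) : ℝ) * A k := by
    simp_rw [← sum_powerset_eq_of_eq_sum_neg_one_pow u I hI, sum_powersetCard_sum_powerset,
      card_univ, ← hA, nsmul_eq_mul]
    refine (sum_subset (fun k hk => ?_) fun k _ hk => ?_).symm
    · simp only [mem_Icc, mem_range] at hk ⊢; omega
    · rcases Nat.eq_zero_or_pos k with rfl | hk0
      · rw [hA_zero, mul_zero]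
      · rw [hA_high k (by simp only [mem_Icc] at hk; omega), mul_zero]
  rw [hubar, hsum, mul_sum]
  refine sum_congr rfl fun k hk => ?_
  rw [← Nat.choose_sub_div_choose ((mem_Icc.mp hk).2.trans hMm) hmn]
  ring

theorem avg_output_decomposition_bounded_order {N : Type*} [Fintype N] [DecidableEq N]
    (u I : Finset N → ℝ) (hu : u ∅ = 0)
    (hI : ∀ S : Finset N, I S = ∑ T ∈ S.powerset, (-1 : ℝ) ^ (S.card - T.card) * u T)
    (M : ℕ) (hM : 0 < M) (hMn : M < Fintype.card N)
    (hhigh : ∀ S : Finset N, M < S.card → I S = 0)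
    (A : ℕ → ℝ)
    (hA : ∀ k, A k = ∑ T ∈ Finset.powersetCard k (Finset.univ : Finset N), I T)
    (ubar : ℕ → ℝ)
    (hubar : ∀ m, ubar m = ((Nat.choose (Fintype.card N) m : ℝ))⁻¹ *
        ∑ S ∈ Finset.powersetCard m (Finset.univ : Finset N), u S) :
    ∀ m, M ≤ m → m ≤ Fintype.card N →
      ubar m = ∑ k ∈ Finset.Icc 1 M,
        ((Nat.choose m k : ℝ) / (Nat.choose (Fintype.card N) k : ℝ)) * A k :=
  avg_output_decomposition_bounded_order_general u I hu hI M hhigh A hA ubar hubar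
end

section
/- Let v : ℝⁿ → ℝ be a multivariate polynomial of total degree at most M, fix x, b ∈ ℝⁿ, and for S ⊆ {1,...,n} let x_S denote the vector equal to x on coordinates in S and equal to b elsewhere. Define u(S) = v(x_S) - v(b) and I(S) = ∑_{T ⊆ S} (-1)^{|S|-|T|} u(T). Then I(S) = 0 for every S with |S| ≥ M+1. -/
/-!
The dividend `∑ T ⊆ S, (-1)^(|S|-|T|) f(T)` is linear in `f` and vanishes as soon as `f(T)` ignores
whether some fixed `j ∈ S` lies in `T`: the terms for `T` and `insert j T` cancel. Expanding `P`
into monomials, a monomial of degree `< |S|` misses some variable `j ∈ S`, so its value at the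
masked point ignores `j`; the constant `v(b)` ignores every `j`.
-/

open Finset MvPolynomial

variable {ι R : Type*} [CommRing R]

def harsanyiDividend (S : Finset ι) : (Finset ι → R) →ₗ[R] R :=
  ∑ T ∈ S.powerset, (-1 : R) ^ (#S - #T) • LinearMap.proj T

theorem harsanyiDividend_apply (S : Finset ι) (f : Finset ι → R) :
    harsanyiDividend S f = ∑ T ∈ S.powerset, (-1) ^ (#S - #T) * f T := by
  simp [harsanyiDividend, LinearMap.sum_apply]

theorem Finsupp.card_support_le_sum (d : ι →₀ ℕ) : #d.support ≤ d.sum fun _ e => e := by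
  classical
  rw [← Finsupp.toFinset_toMultiset]
  exact (Multiset.toFinset_card_le _).trans (Finsupp.card_toMultiset d).le

variable [DecidableEq ι]

theorem harsanyiDividend_eq_zero_of_insert_eq {S : Finset ι} {f : Finset ι → R} {j : ι}
    (hj : j ∈ S) (hf : ∀ T ⊆ S.erase j, f (insert j T) = f T) : harsanyiDividend S f = 0 := by
  rw [harsanyiDividend_apply, ← insert_erase hj, sum_powerset_insert (notMem_erase j S),
    ← sum_add_distrib]
  refine sum_eq_zero fun T hT => ?_
  rw [mem_powerset] at hT
  have hjT : j ∉ T := fun h => notMem_erase j S (hT h)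
  rw [card_insert_of_notMem hjT, card_insert_of_notMem (notMem_erase j S), hf T hT,
    Nat.add_sub_add_right, Nat.sub_add_comm (card_le_card hT), pow_succ]
  ring

theorem harsanyiDividend_const {S : Finset ι} (hS : S.Nonempty) (c : R) :
    harsanyiDividend S (fun _ => c) = 0 :=
  harsanyiDividend_eq_zero_of_insert_eq hS.choose_spec fun _ _ => rfl

theorem harsanyiDividend_eval_piecewise_of_notMem_vars {S : Finset ι} {j : ι} (hj : j ∈ S)
    {p : MvPolynomial ι R} (hjp : j ∉ p.vars) (x b : ι → R) :
    harsanyiDividend S (fun T => eval (T.piecewise x b) p) = 0 := by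
  refine harsanyiDividend_eq_zero_of_insert_eq hj fun T _ => ?_
  refine eval₂Hom_congr' rfl (fun i hi _ => ?_) rfl
  exact T.piecewise_insert_of_ne x b (ne_of_mem_of_not_mem hi hjp)

theorem harsanyiDividend_eval_piecewise_of_totalDegree_lt {S : Finset ι} {p : MvPolynomial ι R}
    (hp : p.totalDegree < #S) (x b : ι → R) :
    harsanyiDividend S (fun T => eval (T.piecewise x b) p) = 0 := by
  have hsum : (fun T : Finset ι => eval (T.piecewise x b) p) =
      ∑ d ∈ p.support, fun T => eval (T.piecewise x b) (monomial d (coeff d p)) := by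
    ext T
    conv_lhs => rw [p.as_sum]
    rw [map_sum, Finset.sum_apply]
  rw [hsum, map_sum]
  refine sum_eq_zero fun d hd => ?_
  have hcard : #d.support < #S :=
    (Finsupp.card_support_le_sum d).trans_lt ((le_totalDegree hd).trans_lt hp)
  obtain ⟨j, hjS, hjd⟩ := exists_mem_notMem_of_card_lt_card hcard
  exact harsanyiDividend_eval_piecewise_of_notMem_vars hjS
    (by rwa [vars_monomial (mem_support_iff.mp hd)]) x b

theorem harsanyi_vanishes_above_degree_general (n M : ℕ)
    (P : MvPolynomial (Fin n) ℝ) (hdeg : P.totalDegree ≤ M)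
    (x b : Fin n → ℝ)
    (u I : Finset (Fin n) → ℝ)
    (hu : ∀ S : Finset (Fin n),
      u S = MvPolynomial.eval (fun i => if i ∈ S then x i else b i) P -
            MvPolynomial.eval b P)
    (hI : ∀ S : Finset (Fin n), I S = ∑ T ∈ S.powerset, (-1 : ℝ) ^ (S.card - T.card) * u T) :
    ∀ S : Finset (Fin n), M + 1 ≤ S.card → I S = 0 := by
  intro S hS
  have hu' : u = (fun T => eval (T.piecewise x b) P) - fun _ => eval b P := funext hu
  rw [hI, ← harsanyiDividend_apply, hu', map_sub,
    harsanyiDividend_eval_piecewise_of_totalDegree_lt (by omega),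
    harsanyiDividend_const (card_pos.mp (by omega)), sub_zero]

theorem harsanyi_vanishes_above_degree (n M : ℕ) (hMn : M < n)
    (P : MvPolynomial (Fin n) ℝ) (hdeg : P.totalDegree ≤ M)
    (x b : Fin n → ℝ)
    (u I : Finset (Fin n) → ℝ)
    (hu : ∀ S : Finset (Fin n),
      u S = MvPolynomial.eval (fun i => if i ∈ S then x i else b i) P -
            MvPolynomial.eval b P)
    (hI : ∀ S : Finset (Fin n), I S = ∑ T ∈ S.powerset, (-1 : ℝ) ^ (S.card - T.card) * u T) :
    ∀ S : Finset (Fin n), M + 1 ≤ S.card → I S = 0 :=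
  harsanyi_vanishes_above_degree_general n M P hdeg x b u I hu hI
end
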